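/- Let G be a connected simple graph with at least one edge, let G' be the Type B Whitney flip of G along (H, v1, v2), and let φ be the map sending each edge {x, y} of G with both endpoints in H to {τ(x), τ(y)} and fixing every other edge of G. Then φ maps the edge set of each block of G bijectively onto the edge set of a block of G', and this induces a bijection between the blocks of G and the blocks of G' under which corresponding blocks have the same number of edges and the same maximum cycle length (with maximum cycle length 0 for blocks containing no cycle). -/

import Mathlib

attribute [local instance] Classical.propDecidable

/-- A cut vertex of (the graph represented by) a subgraph `B`: a vertex of `B` whose
deletion (together with all incident edges) disconnects `B`. -/
def SimpleGraph.Subgraph.IsCutVertex {V : Type*} {G : SimpleGraph V} (B : G.Subgraph)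
    (v : V) : Prop :=
  v ∈ B.verts ∧ ¬ (B.deleteVerts {v}).coe.Preconnected

/-- A block of `G`: an induced connected subgraph without cut vertices that is maximal
with this property. -/
def SimpleGraph.Subgraph.IsBlock {V : Type*} {G : SimpleGraph V} (B : G.Subgraph) : Prop :=
  B.IsInduced ∧ B.coe.Connected ∧ (∀ v, ¬ B.IsCutVertex v) ∧
    ∀ B' : G.Subgraph, B'.IsInduced → B'.coe.Connected → (∀ v, ¬ B'.IsCutVertex v) →
      B ≤ B' → B = B'

/-- The maximum length of a cycle all of whose edges lie in the subgraph `B`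
(`0` if there is no such cycle). -/
noncomputable def maxCycleLength {V : Type*} {G : SimpleGraph V} (B : G.Subgraph) : ℕ :=
  sSup {n : ℕ | ∃ u : V, ∃ c : G.Walk u u, c.IsCycle ∧
    (∀ f ∈ c.edges, f ∈ B.edgeSet) ∧ c.length = n}

open SimpleGraph

/-- The vertex map of the Type B Whitney flip: `v1 ↦ v2`, all other vertices fixed. -/
def tauB {V : Type*} [DecidableEq V] (v1 v2 : V) (x : V) : V :=
  if x = v1 then v2 else x

/-- The Type B Whitney flip of `G` along `(H, v1, v2)` (where `v2 ∉ H`): edges with both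
endpoints in `H` are mapped by `tauB v1 v2`; all other edges are kept. -/
def typeBFlip {V : Type*} [DecidableEq V] (G : SimpleGraph V) (v1 v2 : V) (H : Set V)
    (hv2 : v2 ∉ H) : SimpleGraph V where
  Adj a b :=
    (∃ x y : V, x ∈ H ∧ y ∈ H ∧ G.Adj x y ∧ a = tauB v1 v2 x ∧ b = tauB v1 v2 y) ∨
    (¬(a ∈ H ∧ b ∈ H) ∧ G.Adj a b)
  symm := by
    constructor
    rintro a b (⟨x, y, hx, hy, h, ha, hb⟩ | ⟨hn, h⟩)
    · exact Or.inl ⟨y, x, hy, hx, h.symm, hb, ha⟩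
    · exact Or.inr ⟨fun ⟨hb', ha'⟩ => hn ⟨ha', hb'⟩, h.symm⟩
  loopless := by
    constructor
    rintro a (⟨x, y, hx, hy, h, ha, hb⟩ | ⟨_, h⟩)
    · have hxy : tauB v1 v2 x = tauB v1 v2 y := ha ▸ hb
      unfold tauB at hxy
      split_ifs at hxy with hx1 hy1 hy1
      · exact h.ne (hx1.trans hy1.symm)
      · exact hv2 (hxy ▸ hy)
      · exact hv2 (hxy ▸ hx)
      · exact h.ne hxy
    · exact G.loopless.irrefl _ h

/-- The edge map of the Type B Whitney flip: an edge with both endpoints in `H` is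
mapped by `tauB v1 v2`; every other edge is fixed. -/
noncomputable def phiB {V : Type*} [DecidableEq V] (v1 v2 : V) (H : Set V)
    (e : Sym2 V) : Sym2 V :=
  if ∀ x ∈ e, x ∈ H then e.map (tauB v1 v2) else e

/-!
A connected subgraph without cut vertices that is not contained in `H` meets `H` at most in
`v1`, because every edge leaving `H \ {v1}` ends in `H`, so `v1` would separate. Hence the flip
leaves such a subgraph untouched, while it carries a subgraph inside `H` isomorphically by the
transposition of `v1` and `v2` (which agrees with `tauB v1 v2` on `H`). On nonseparable subgraphs
with an edge this map is monotone and is inverted by the reverse flip, itself a Type B flip from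
`G'` back to `G` along `(tauB v1 v2 '' H, v2, v1)`; so it preserves maximality, i.e. blocks, and
the injective vertex map transports edges and cycles.
-/

lemma Set.not_subset_insert_of_disjoint {V : Type*} {S K : Set V} (hS : Disjoint S K) {v x y : V}
    (hx : x ∈ S) (hy : y ∈ S) (hxy : x ≠ y) : ¬ S ⊆ insert v K := fun h ↦
  hxy (((h hx).resolve_right (hS.notMem_of_mem_left hx)).trans
    ((h hy).resolve_right (hS.notMem_of_mem_left hy)).symm)

namespace SimpleGraph

namespace Subgraph

variable {V W : Type*} {G : SimpleGraph V} {G' : SimpleGraph W}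

def IsNonseparable (C : G.Subgraph) : Prop :=
  C.IsInduced ∧ C.coe.Connected ∧ ∀ v, ¬ C.IsCutVertex v

lemma IsBlock.isNonseparable {B : G.Subgraph} (hB : B.IsBlock) : B.IsNonseparable :=
  ⟨hB.1, hB.2.1, hB.2.2.1⟩

lemma IsBlock.eq_of_le {B C : G.Subgraph} (hB : B.IsBlock) (hC : C.IsNonseparable)
    (hBC : B ≤ C) : B = C :=
  hB.2.2.2 C hC.1 hC.2.1 hC.2.2 hBC

lemma IsBlock.of_isNonseparable {B : G.Subgraph} (hB : B.IsNonseparable)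
    (hmax : ∀ C : G.Subgraph, C.IsNonseparable → B ≤ C → B = C) : B.IsBlock :=
  ⟨hB.1, hB.2.1, hB.2.2, fun C hCi hCc hCcut ↦ hmax C ⟨hCi, hCc, hCcut⟩⟩

lemma IsNonseparable.preconnected_deleteVerts {C : G.Subgraph} (hC : C.IsNonseparable)
    {v : V} (hv : v ∈ C.verts) : (C.deleteVerts {v}).coe.Preconnected :=
  not_not.1 fun h ↦ hC.2.2 v ⟨hv, h⟩

lemma exists_adj_mem_notMem_of_preconnected {D : G.Subgraph} (hD : D.coe.Preconnected)
    {K : Set V} {y w : V} (hy : y ∈ D.verts) (hw : w ∈ D.verts) (hyK : y ∈ K) (hwK : w ∉ K) :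
    ∃ a b, D.Adj a b ∧ a ∈ K ∧ b ∉ K := by
  obtain ⟨p⟩ := hD ⟨y, hy⟩ ⟨w, hw⟩
  obtain ⟨d, -, hd₁, hd₂⟩ := p.exists_boundary_dart {z : D.verts | z.1 ∈ K} hyK hwK
  exact ⟨_, _, d.adj, hd₁, hd₂⟩

lemma IsNonseparable.disjoint_of_not_subset_insert {C : G.Subgraph} (hC : C.IsNonseparable)
    {K : Set V} {v : V} (hK : ∀ ⦃x y⦄, G.Adj x y → x ∈ K → y ∈ insert v K)
    (hCK : ¬ C.verts ⊆ insert v K) : Disjoint C.verts K := by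
  rw [Set.disjoint_left]
  intro y hy hyK
  obtain ⟨w, hw, hwK⟩ := Set.not_subset.1 hCK
  have hwK' : w ∉ K := fun h ↦ hwK (Or.inr h)
  have exit_eq : ∀ ⦃a b⦄, G.Adj a b → a ∈ K → b ∉ K → b = v :=
    fun a b hab ha hb ↦ (hK hab ha).resolve_right hb
  obtain ⟨a, b, hab, ha, hb⟩ :=
    exists_adj_mem_notMem_of_preconnected hC.2.1.preconnected hy hw hyK hwK'
  obtain rfl := exit_eq (C.adj_sub hab) ha hb
  obtain ⟨a', b', hab', ha', hb'⟩ := exists_adj_mem_notMem_of_preconnected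
    (hC.preconnected_deleteVerts (C.edge_vert hab.symm)) (y := y) (w := w)
    ⟨hy, by rintro rfl; exact hb hyK⟩ ⟨hw, by rintro rfl; exact hwK (Or.inl rfl)⟩ hyK hwK'
  rw [deleteVerts_adj] at hab'
  exact hab'.2.2.2.1 (exit_eq (C.adj_sub hab'.2.2.2.2) ha' hb')

lemma isNonseparable_subgraphOfAdj {u w : V} (huw : G.Adj u w) :
    (G.subgraphOfAdj huw).IsNonseparable := by
  refine ⟨?_, (subgraphOfAdj_connected huw).coe, fun v ⟨hv, hcut⟩ ↦ hcut ?_⟩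
  · intro a ha b hb hab
    simp only [subgraphOfAdj_verts, Set.mem_insert_iff, Set.mem_singleton_iff] at ha hb
    rcases ha with rfl | rfl <;> rcases hb with rfl | rfl
    all_goals first | exact absurd hab (G.loopless.irrefl _) | simp [Sym2.eq_swap]
  · have : Subsingleton ((G.subgraphOfAdj huw).deleteVerts {v}).verts := by
      constructor
      rintro ⟨a, ha, ha'⟩ ⟨b, hb, hb'⟩
      simp only [subgraphOfAdj_verts, Set.mem_insert_iff, Set.mem_singleton_iff] at ha hb ha' hb' hv
      ext
      grind
    exact Preconnected.of_subsingleton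

lemma _root_.SimpleGraph.Connected.exists_adj_of_isBlock [Nontrivial V] (hG : G.Connected)
    {B : G.Subgraph} (hB : B.IsBlock) : ∃ x y, B.Adj x y := by
  by_contra! hB₀
  obtain ⟨⟨u, hu⟩⟩ := hB.2.1.nonempty
  obtain ⟨w, huw⟩ := hG.preconnected.exists_adj_of_nontrivial u
  have hverts : ∀ x ∈ B.verts, x = u := fun x hx ↦ by
    by_contra hxu
    obtain ⟨p⟩ := hB.2.1.preconnected ⟨x, hx⟩ ⟨u, hu⟩
    exact hB₀ _ _ (p.adj_snd (p.not_nil_of_ne fun h ↦ hxu (congrArg Subtype.val h)))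
  have hle : B ≤ G.subgraphOfAdj huw :=
    ⟨fun x hx ↦ by simp [hverts x hx], fun x y h ↦ absurd h (hB₀ x y)⟩
  have hw : w ∈ B.verts := by
    rw [hB.eq_of_le (isNonseparable_subgraphOfAdj huw) hle]
    simp
  exact huw.ne' (hverts w hw)

def cycleLengths (B : G.Subgraph) : Set ℕ :=
  {n | ∃ u, ∃ c : G.Walk u u, c.IsCycle ∧ (∀ e ∈ c.edges, e ∈ B.edgeSet) ∧ c.length = n}

lemma _root_.maxCycleLength_eq_sSup_cycleLengths (B : G.Subgraph) :
    maxCycleLength B = sSup B.cycleLengths := rfl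

@[simps]
def transport (C : G.Subgraph) (f : V → W) (hf : ∀ ⦃a b⦄, C.Adj a b → G'.Adj (f a) (f b)) :
    G'.Subgraph where
  verts := f '' C.verts
  Adj := Relation.Map C.Adj f f
  adj_sub := by
    rintro _ _ ⟨a, b, h, rfl, rfl⟩
    exact hf h
  edge_vert := by
    rintro _ _ ⟨a, b, h, rfl, rfl⟩
    exact ⟨a, C.edge_vert h, rfl⟩
  symm.symm := by
    rintro _ _ ⟨a, b, h, rfl, rfl⟩
    exact ⟨b, a, h.symm, rfl, rfl⟩

section transport

variable {C : G.Subgraph} {f : V → W} {hf : ∀ ⦃a b⦄, C.Adj a b → G'.Adj (f a) (f b)}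

lemma edgeSet_transport : (C.transport f hf).edgeSet = Sym2.map f '' C.edgeSet :=
  Sym2.fromRel_relationMap ..

lemma transport_le_transport {B : G.Subgraph} {g : V → W}
    {hg : ∀ ⦃a b⦄, B.Adj a b → G'.Adj (g a) (g b)} (hBC : B ≤ C)
    (hgf : Set.EqOn g f B.verts) : B.transport g hg ≤ C.transport f hf := by
  constructor
  · rintro _ ⟨x, hx, rfl⟩
    exact ⟨x, hBC.1 hx, (hgf hx).symm⟩
  · rintro _ _ ⟨a, b, hab, rfl, rfl⟩
    exact ⟨a, b, hBC.2 hab, (hgf (B.edge_vert hab)).symm, (hgf (B.edge_vert hab.symm)).symm⟩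

lemma transport_transport_of_leftInvOn {D : G'.Subgraph} (hD : D = C.transport f hf) {g : W → V}
    {hg : ∀ ⦃a b⦄, D.Adj a b → G.Adj (g a) (g b)} (hgf : Set.LeftInvOn g f C.verts) :
    D.transport g hg = C := by
  subst hD
  ext a b
  · exact Set.ext_iff.1 hgf.image_image a
  · simp only [transport_adj, Relation.Map]
    constructor
    · rintro ⟨_, _, ⟨x, y, hxy, rfl, rfl⟩, rfl, rfl⟩
      rwa [hgf (C.edge_vert hxy), hgf (C.edge_vert hxy.symm)]
    · intro hab
      exact ⟨f a, f b, ⟨a, b, hab, rfl, rfl⟩, hgf (C.edge_vert hab), hgf (C.edge_vert hab.symm)⟩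

lemma transport_adj_apply (hinj : Function.Injective f) {a b : V} :
    (C.transport f hf).Adj (f a) (f b) ↔ C.Adj a b :=
  Relation.map_apply_apply hinj hinj _ _ _

lemma transport_deleteVerts (hinj : Function.Injective f) (v : V) :
    (C.transport f hf).deleteVerts {f v} =
      (C.deleteVerts {v}).transport f fun _ _ hab ↦ hf (deleteVerts_le.2 hab) := by
  ext a b
  · simp [Set.image_sdiff hinj]
  · simp only [deleteVerts_adj, transport_adj, Relation.Map, Set.mem_singleton_iff]
    constructor
    · rintro ⟨-, hav, -, hbv, x, y, hxy, rfl, rfl⟩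
      exact ⟨x, y, ⟨hxy.fst_mem, fun h ↦ hav (h ▸ rfl), hxy.snd_mem, fun h ↦ hbv (h ▸ rfl), hxy⟩,
        rfl, rfl⟩
    · rintro ⟨x, y, ⟨hx, hxv, hy, hyv, hxy⟩, rfl, rfl⟩
      exact ⟨⟨x, hx, rfl⟩, hinj.ne hxv, ⟨y, hy, rfl⟩, hinj.ne hyv, x, y, hxy, rfl, rfl⟩

noncomputable def transportIso (hinj : Function.Injective f) :
    C.coe ≃g (C.transport f hf).coe where
  toEquiv := Equiv.Set.image f C.verts hinj
  map_rel_iff' := transport_adj_apply (hf := hf) hinj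

lemma IsNonseparable.transport (hC : C.IsNonseparable) (hinj : Function.Injective f)
    (hind : ∀ a ∈ C.verts, ∀ b ∈ C.verts, G'.Adj (f a) (f b) → G.Adj a b) :
    (C.transport f hf).IsNonseparable := by
  refine ⟨?_, (transportIso hinj).connected_iff.1 hC.2.1, ?_⟩
  · rintro _ ⟨a, ha, rfl⟩ _ ⟨b, hb, rfl⟩ hab
    exact (transport_adj_apply hinj).2 (hC.1 ha hb (hind a ha b hb hab))
  · rintro _ ⟨⟨v, hv, rfl⟩, hcut⟩
    rw [transport_deleteVerts hinj] at hcut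
    exact hcut ((transportIso hinj).preconnected_iff.1 (hC.preconnected_deleteVerts hv))

lemma cycleLengths_subset_transport (hinj : Function.Injective f) :
    C.cycleLengths ⊆ (C.transport f hf).cycleLengths := by
  rintro _ ⟨u, c, hc, hcC, rfl⟩
  have hcC' : ∀ e ∈ c.edges, e ∈ C.spanningCoe.edgeSet := by rwa [edgeSet_spanningCoe]
  let φ : C.spanningCoe →g G' := ⟨f, fun hab ↦ hf hab⟩
  refine ⟨f u, (c.transfer _ hcC').map φ, (hc.transfer hcC').map hinj, ?_, by simp⟩
  rw [Walk.edges_map, Walk.edges_transfer, edgeSet_transport]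
  intro e he
  obtain ⟨e', he', rfl⟩ := List.mem_map.1 he
  exact ⟨e', hcC e' he', rfl⟩

end transport

end Subgraph

open Subgraph Equiv

variable {V : Type*} [DecidableEq V] {G G' : SimpleGraph V} {v1 v2 : V} {K : Set V}

/-- The situation of a Type B Whitney flip with `K = H \ {v1}`, stated symmetrically in
`(G, v1)` and `(G', v2)`: `swap v1 v2` carries `G[K ∪ {v1}]` onto `G'[K ∪ {v2}]`, and `G`, `G'`
agree off `K`. -/
structure IsTypeBFlip (G G' : SimpleGraph V) (v1 v2 : V) (K : Set V) : Prop where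
  ne : v1 ≠ v2
  v1_notMem : v1 ∉ K
  v2_notMem : v2 ∉ K
  mem_insert_of_adj : ∀ ⦃x y⦄, G.Adj x y → x ∈ K → y ∈ insert v1 K
  mem_insert_of_adj' : ∀ ⦃x y⦄, G'.Adj x y → x ∈ K → y ∈ insert v2 K
  adj_swap_iff : ∀ ⦃x y⦄, x ∈ insert v1 K → y ∈ insert v1 K →
    (G'.Adj (swap v1 v2 x) (swap v1 v2 y) ↔ G.Adj x y)
  adj_iff : ∀ ⦃x y⦄, x ∉ K → y ∉ K → (G'.Adj x y ↔ G.Adj x y)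

lemma swap_apply_of_mem (h1 : v1 ∉ K) (h2 : v2 ∉ K) {z : V} (hz : z ∈ K) : swap v1 v2 z = z :=
  swap_apply_of_ne_of_ne (ne_of_mem_of_not_mem hz h1) (ne_of_mem_of_not_mem hz h2)

lemma tauB_eq_swap {x : V} (hx : x ≠ v2) : tauB v1 v2 x = swap v1 v2 x := by
  unfold tauB
  split_ifs with h
  · rw [h, swap_apply_left]
  · rw [swap_apply_of_ne_of_ne h hx]

lemma swap_mem_insert_iff (h1 : v1 ∉ K) (h2 : v2 ∉ K) {x : V} :
    swap v1 v2 x ∈ insert v2 K ↔ x ∈ insert v1 K := by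
  rcases eq_or_ne x v1 with rfl | hx1
  · simp
  rcases eq_or_ne x v2 with rfl | hx2
  · simp [h1, h2, hx1, hx1.symm]
  · simp [swap_apply_of_ne_of_ne hx1 hx2, hx1, hx2]

noncomputable def flipPerm (v1 v2 : V) (K S : Set V) : Perm V :=
  if S ⊆ insert v1 K then swap v1 v2 else 1

/-- Junk value `⊥` unless `flipPerm` maps the edges of `C` to edges of `G'`. -/
noncomputable def flipSub (G' : SimpleGraph V) (v1 v2 : V) (K : Set V) (C : G.Subgraph) :
    G'.Subgraph :=
  if h : ∀ ⦃a b⦄, C.Adj a b →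
      G'.Adj (flipPerm v1 v2 K C.verts a) (flipPerm v1 v2 K C.verts b) then
    C.transport _ h
  else ⊥

namespace IsTypeBFlip

lemma symm (hφ : IsTypeBFlip G G' v1 v2 K) : IsTypeBFlip G' G v2 v1 K where
  ne := hφ.ne.symm
  v1_notMem := hφ.v2_notMem
  v2_notMem := hφ.v1_notMem
  mem_insert_of_adj := hφ.mem_insert_of_adj'
  mem_insert_of_adj' := hφ.mem_insert_of_adj
  adj_swap_iff x y hx hy := by
    rw [← swap_apply_self v1 v2 x, swap_mem_insert_iff hφ.v1_notMem hφ.v2_notMem] at hx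
    rw [← swap_apply_self v1 v2 y, swap_mem_insert_iff hφ.v1_notMem hφ.v2_notMem] at hy
    rw [swap_comm, ← hφ.adj_swap_iff hx hy, swap_apply_self, swap_apply_self]
  adj_iff _ _ hx hy := (hφ.adj_iff hx hy).symm

lemma v2_notMem_insert (hφ : IsTypeBFlip G G' v1 v2 K) : v2 ∉ insert v1 K :=
  fun h ↦ h.elim (fun h ↦ hφ.ne h.symm) hφ.v2_notMem

variable {C B : G.Subgraph}

lemma adj_flipPerm_iff (hφ : IsTypeBFlip G G' v1 v2 K) (hC : C.IsNonseparable) {a b : V}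
    (ha : a ∈ C.verts) (hb : b ∈ C.verts) :
    G'.Adj (flipPerm v1 v2 K C.verts a) (flipPerm v1 v2 K C.verts b) ↔ G.Adj a b := by
  unfold flipPerm
  split_ifs with hCK
  · exact hφ.adj_swap_iff (hCK ha) (hCK hb)
  · have hdisj := hC.disjoint_of_not_subset_insert hφ.mem_insert_of_adj hCK
    exact hφ.adj_iff (hdisj.notMem_of_mem_left ha) (hdisj.notMem_of_mem_left hb)

lemma flipSub_eq (hφ : IsTypeBFlip G G' v1 v2 K) (hC : C.IsNonseparable) :
    flipSub G' v1 v2 K C = C.transport (flipPerm v1 v2 K C.verts)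
      (fun _ _ hab ↦ (hφ.adj_flipPerm_iff hC hab.fst_mem hab.snd_mem).2 hab.adj_sub) :=
  dif_pos _

lemma isNonseparable_flipSub (hφ : IsTypeBFlip G G' v1 v2 K) (hC : C.IsNonseparable) :
    (flipSub G' v1 v2 K C).IsNonseparable := by
  rw [hφ.flipSub_eq hC]
  exact hC.transport (Equiv.injective _) fun a ha b hb ↦ (hφ.adj_flipPerm_iff hC ha hb).1

lemma flipSub_adj (hφ : IsTypeBFlip G G' v1 v2 K) (hC : C.IsNonseparable) {x y : V}
    (hxy : C.Adj x y) :
    (flipSub G' v1 v2 K C).Adj (flipPerm v1 v2 K C.verts x) (flipPerm v1 v2 K C.verts y) := by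
  rw [hφ.flipSub_eq hC]
  exact ⟨x, y, hxy, rfl, rfl⟩

lemma flipPerm_eq_of_le (hφ : IsTypeBFlip G G' v1 v2 K) (hC : C.IsNonseparable) (hBC : B ≤ C)
    {x y : V} (hxy : B.Adj x y) : flipPerm v1 v2 K B.verts = flipPerm v1 v2 K C.verts := by
  unfold flipPerm
  by_cases hCK : C.verts ⊆ insert v1 K
  · rw [if_pos (hBC.1.trans hCK), if_pos hCK]
  · have hdisj := hC.disjoint_of_not_subset_insert hφ.mem_insert_of_adj hCK
    rw [if_neg hCK, if_neg (Set.not_subset_insert_of_disjoint (hdisj.mono_left hBC.1)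
      hxy.fst_mem hxy.snd_mem hxy.ne)]

lemma flipSub_mono (hφ : IsTypeBFlip G G' v1 v2 K) (hB : B.IsNonseparable)
    (hC : C.IsNonseparable) (hBC : B ≤ C) {x y : V} (hxy : B.Adj x y) :
    flipSub G' v1 v2 K B ≤ flipSub G' v1 v2 K C := by
  rw [hφ.flipSub_eq hB, hφ.flipSub_eq hC]
  exact transport_le_transport hBC fun _ _ ↦ by rw [hφ.flipPerm_eq_of_le hC hBC hxy]

lemma flipPerm_flipSub_mul_flipPerm (hφ : IsTypeBFlip G G' v1 v2 K) (hC : C.IsNonseparable)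
    {x y : V} (hxy : C.Adj x y) :
    flipPerm v2 v1 K (flipSub G' v1 v2 K C).verts * flipPerm v1 v2 K C.verts = 1 := by
  rw [hφ.flipSub_eq hC, transport_verts]
  by_cases hCK : C.verts ⊆ insert v1 K
  · have hCK' : swap v1 v2 '' C.verts ⊆ insert v2 K := Set.image_subset_iff.2 fun _ hz ↦
      (swap_mem_insert_iff hφ.v1_notMem hφ.v2_notMem).2 (hCK hz)
    simp only [flipPerm, if_pos hCK, if_pos hCK', swap_comm v2 v1, swap_mul_self]
  · have hdisj := hC.disjoint_of_not_subset_insert hφ.mem_insert_of_adj hCK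
    have hCK' := Set.not_subset_insert_of_disjoint (v := v2) hdisj hxy.fst_mem hxy.snd_mem hxy.ne
    simp only [flipPerm, if_neg hCK, Perm.coe_one, Set.image_id, if_neg hCK', mul_one]

lemma flipSub_flipSub (hφ : IsTypeBFlip G G' v1 v2 K) (hC : C.IsNonseparable) {x y : V}
    (hxy : C.Adj x y) : flipSub G v2 v1 K (flipSub G' v1 v2 K C) = C := by
  rw [hφ.symm.flipSub_eq (hφ.isNonseparable_flipSub hC)]
  refine transport_transport_of_leftInvOn (hφ.flipSub_eq hC) fun z _ ↦ ?_
  rw [← Perm.mul_apply, hφ.flipPerm_flipSub_mul_flipPerm hC hxy, Perm.one_apply]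

lemma isBlock_flipSub (hφ : IsTypeBFlip G G' v1 v2 K) (hB : B.IsBlock) {x y : V}
    (hxy : B.Adj x y) : (flipSub G' v1 v2 K B).IsBlock := by
  have hB' := hφ.isNonseparable_flipSub hB.isNonseparable
  have hxy' := hφ.flipSub_adj hB.isNonseparable hxy
  refine IsBlock.of_isNonseparable hB' fun C' hC' hle ↦ ?_
  have hBC' : B = flipSub G v2 v1 K C' := by
    refine hB.eq_of_le (hφ.symm.isNonseparable_flipSub hC') ?_
    calc B = flipSub G v2 v1 K (flipSub G' v1 v2 K B) :=
          (hφ.flipSub_flipSub hB.isNonseparable hxy).symm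
      _ ≤ flipSub G v2 v1 K C' := hφ.symm.flipSub_mono hB' hC' hle hxy'
  rw [hBC', hφ.symm.flipSub_flipSub hC' (hle.2 hxy')]

lemma phiB_eq_map_flipPerm (hφ : IsTypeBFlip G G' v1 v2 K) (hC : C.IsNonseparable) {e : Sym2 V}
    (he : e ∈ C.edgeSet) : phiB v1 v2 (insert v1 K) e = e.map (flipPerm v1 v2 K C.verts) := by
  unfold phiB flipPerm
  by_cases hCK : C.verts ⊆ insert v1 K
  · rw [if_pos fun z hz ↦ hCK (C.mem_verts_of_mem_edge he hz), if_pos hCK]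
    exact Sym2.map_congr fun z hz ↦ tauB_eq_swap
      (ne_of_mem_of_not_mem (hCK (C.mem_verts_of_mem_edge he hz)) hφ.v2_notMem_insert)
  · have hdisj := hC.disjoint_of_not_subset_insert hφ.mem_insert_of_adj hCK
    induction e using Sym2.ind with | _ x y => ?_
    have hxy : C.Adj x y := he
    rw [if_neg, if_neg hCK, Perm.coe_one, Sym2.map_id, id]
    intro h
    refine hxy.ne (((h x (Sym2.mem_mk_left x y)).resolve_right ?_).trans
      ((h y (Sym2.mem_mk_right x y)).resolve_right ?_).symm)
    · exact hdisj.notMem_of_mem_left hxy.fst_mem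
    · exact hdisj.notMem_of_mem_left hxy.snd_mem

lemma bijOn_phiB (hφ : IsTypeBFlip G G' v1 v2 K) (hC : C.IsNonseparable) :
    Set.BijOn (phiB v1 v2 (insert v1 K)) C.edgeSet (flipSub G' v1 v2 K C).edgeSet := by
  rw [hφ.flipSub_eq hC, edgeSet_transport]
  exact (Sym2.map.injective (Equiv.injective _)).injOn.bijOn_image.congr
    fun e he ↦ (hφ.phiB_eq_map_flipPerm hC he).symm

lemma cycleLengths_subset_flipSub (hφ : IsTypeBFlip G G' v1 v2 K) (hC : C.IsNonseparable) :
    C.cycleLengths ⊆ (flipSub G' v1 v2 K C).cycleLengths := by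
  rw [hφ.flipSub_eq hC]
  exact cycleLengths_subset_transport (Equiv.injective _)

lemma maxCycleLength_flipSub (hφ : IsTypeBFlip G G' v1 v2 K) (hC : C.IsNonseparable) {x y : V}
    (hxy : C.Adj x y) : maxCycleLength (flipSub G' v1 v2 K C) = maxCycleLength C := by
  rw [maxCycleLength_eq_sSup_cycleLengths, maxCycleLength_eq_sSup_cycleLengths]
  refine congrArg sSup (Set.Subset.antisymm ?_ (hφ.cycleLengths_subset_flipSub hC))
  calc _ ⊆ (flipSub G v2 v1 K (flipSub G' v1 v2 K C)).cycleLengths :=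
        hφ.symm.cycleLengths_subset_flipSub (hφ.isNonseparable_flipSub hC)
    _ = C.cycleLengths := by rw [hφ.flipSub_flipSub hC hxy]

lemma reachable_of_adj (hφ : IsTypeBFlip G G' v1 v2 K) (h12 : G.Adj v1 v2) {x y : V}
    (hxy : G.Adj x y) : G'.Reachable x y := by
  have reachable_swap : ∀ z ∈ insert v1 K, G'.Reachable z (swap v1 v2 z) := by
    rintro z (rfl | hz)
    · rw [swap_apply_left]
      exact ((hφ.adj_iff hφ.v1_notMem hφ.v2_notMem).2 h12).reachable
    · rw [swap_apply_of_mem hφ.v1_notMem hφ.v2_notMem hz]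
  by_cases hxyK : x ∈ insert v1 K ∧ y ∈ insert v1 K
  · exact ((reachable_swap x hxyK.1).trans ((hφ.adj_swap_iff hxyK.1 hxyK.2).2 hxy).reachable).trans
      (reachable_swap y hxyK.2).symm
  · have hx : x ∉ K := fun hx ↦ hxyK ⟨Or.inr hx, hφ.mem_insert_of_adj hxy hx⟩
    have hy : y ∉ K := fun hy ↦ hxyK ⟨hφ.mem_insert_of_adj hxy.symm hy, Or.inr hy⟩
    exact ((hφ.adj_iff hx hy).2 hxy).reachable

lemma connected (hφ : IsTypeBFlip G G' v1 v2 K) (hG : G.Connected) (h12 : G.Adj v1 v2) :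
    G'.Connected := by
  refine (connected_iff _).2 ⟨fun x y ↦ ?_, hG.nonempty⟩
  obtain ⟨p⟩ := hG.preconnected x y
  induction p with
  | nil => rfl
  | cons hxy _ ih => exact (hφ.reachable_of_adj h12 hxy).trans ih

noncomputable def blockEquiv (hφ : IsTypeBFlip G G' v1 v2 K) (hG : G.Connected)
    (hG' : G'.Connected) : {B : G.Subgraph // B.IsBlock} ≃ {B : G'.Subgraph // B.IsBlock} :=
  haveI : Nontrivial V := ⟨v1, v2, hφ.ne⟩
  { toFun B := ⟨flipSub G' v1 v2 K B, by
      obtain ⟨x, y, hxy⟩ := hG.exists_adj_of_isBlock B.2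
      exact hφ.isBlock_flipSub (B := B.1) B.2 hxy⟩
    invFun B := ⟨flipSub G v2 v1 K B, by
      obtain ⟨x, y, hxy⟩ := hG'.exists_adj_of_isBlock B.2
      exact hφ.symm.isBlock_flipSub (B := B.1) B.2 hxy⟩
    left_inv B := by
      obtain ⟨x, y, hxy⟩ := hG.exists_adj_of_isBlock B.2
      exact Subtype.ext (hφ.flipSub_flipSub B.2.isNonseparable hxy)
    right_inv B := by
      obtain ⟨x, y, hxy⟩ := hG'.exists_adj_of_isBlock B.2
      exact Subtype.ext (hφ.symm.flipSub_flipSub B.2.isNonseparable hxy) }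

end IsTypeBFlip

lemma typeBFlip_adj_iff (hv1 : v1 ∉ K) (hv2 : v2 ∉ insert v1 K) {a b : V} :
    (typeBFlip G v1 v2 (insert v1 K) hv2).Adj a b ↔
      (a ∈ insert v2 K ∧ b ∈ insert v2 K ∧ G.Adj (swap v1 v2 a) (swap v1 v2 b)) ∨
        (¬(a ∈ insert v1 K ∧ b ∈ insert v1 K) ∧ G.Adj a b) := by
  have hv2K : v2 ∉ K := fun h ↦ hv2 (Or.inr h)
  have tauB_eq : ∀ x ∈ insert v1 K, tauB v1 v2 x = swap v1 v2 x :=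
    fun x hx ↦ tauB_eq_swap (ne_of_mem_of_not_mem hx hv2)
  refine or_congr_left ⟨?_, fun ⟨ha, hb, hab⟩ ↦ ?_⟩
  · rintro ⟨x, y, hx, hy, hxy, rfl, rfl⟩
    rw [tauB_eq x hx, tauB_eq y hy, swap_mem_insert_iff hv1 hv2K, swap_mem_insert_iff hv1 hv2K,
      swap_apply_self, swap_apply_self]
    exact ⟨hx, hy, hxy⟩
  · rw [← swap_apply_self v1 v2 a, swap_mem_insert_iff hv1 hv2K] at ha
    rw [← swap_apply_self v1 v2 b, swap_mem_insert_iff hv1 hv2K] at hb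
    refine ⟨_, _, ha, hb, hab, ?_, ?_⟩
    · rw [tauB_eq _ ha, swap_apply_self]
    · rw [tauB_eq _ hb, swap_apply_self]

lemma isTypeBFlip_typeBFlip (hv1 : v1 ∉ K) (hv2 : v2 ∉ insert v1 K)
    (hK : ∀ ⦃x y⦄, G.Adj x y → x ∈ K → y ∈ insert v1 K) :
    IsTypeBFlip G (typeBFlip G v1 v2 (insert v1 K) hv2) v1 v2 K where
  ne h := hv2 (h ▸ Set.mem_insert v1 K)
  v1_notMem := hv1
  v2_notMem h := hv2 (Or.inr h)
  mem_insert_of_adj := hK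
  mem_insert_of_adj' x y hxy hx := by
    rcases (typeBFlip_adj_iff hv1 hv2).1 hxy with ⟨-, hy, -⟩ | ⟨hn, hxy⟩
    · exact hy
    · exact absurd ⟨Or.inr hx, hK hxy hx⟩ hn
  adj_swap_iff x y hx hy := by
    have hv2K : v2 ∉ K := fun h ↦ hv2 (Or.inr h)
    rw [typeBFlip_adj_iff hv1 hv2, swap_apply_self, swap_apply_self,
      swap_mem_insert_iff hv1 hv2K, swap_mem_insert_iff hv1 hv2K]
    refine ⟨?_, fun hxy ↦ Or.inl ⟨hx, hy, hxy⟩⟩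
    rintro (⟨-, -, hxy⟩ | ⟨hn, hxy⟩)
    · exact hxy
    exfalso
    rcases hx with rfl | hxK <;> rcases hy with rfl | hyK
    · exact hxy.ne rfl
    · rw [swap_apply_left, swap_apply_of_mem hv1 hv2K hyK] at hxy
      exact hv2 (hK hxy.symm hyK)
    · rw [swap_apply_left, swap_apply_of_mem hv1 hv2K hxK] at hxy
      exact hv2 (hK hxy hxK)
    · rw [swap_apply_of_mem hv1 hv2K hxK, swap_apply_of_mem hv1 hv2K hyK] at hn
      exact hn ⟨Or.inr hxK, Or.inr hyK⟩
  adj_iff x y hx hy := by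
    rw [typeBFlip_adj_iff hv1 hv2]
    refine ⟨?_, fun hxy ↦ Or.inr ⟨fun ⟨hx', hy'⟩ ↦ hxy.ne ?_, hxy⟩⟩
    · rintro (⟨hx', hy', hxy⟩ | ⟨-, hxy⟩)
      · obtain rfl := hx'.resolve_right hx
        obtain rfl := hy'.resolve_right hy
        exact (hxy.ne rfl).elim
      · exact hxy
    · exact (hx'.resolve_right hx).trans (hy'.resolve_right hy).symm

end SimpleGraph

theorem typeBFlip_block_bijection_general {V : Type*} [DecidableEq V]
    (G : SimpleGraph V) (hGconn : G.Connected)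
    (v1 v2 : V) (hadj : G.Adj v1 v2)
    (H : Set V) (h1 : v1 ∈ H) (hv2 : v2 ∉ H)
    (hHedge : ∀ x y : V, G.Adj x y → x ∈ H \ ({v1} : Set V) → y ∈ H) :
    (∀ B : G.Subgraph, B.IsBlock → ∃ B' : (typeBFlip G v1 v2 H hv2).Subgraph, B'.IsBlock ∧
        Set.BijOn (phiB v1 v2 H) B.edgeSet B'.edgeSet) ∧
      ∃ F : {B : G.Subgraph // B.IsBlock} ≃
          {B' : (typeBFlip G v1 v2 H hv2).Subgraph // B'.IsBlock},
        ∀ B : {B : G.Subgraph // B.IsBlock},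
          Set.BijOn (phiB v1 v2 H) B.1.edgeSet (F B).1.edgeSet ∧
          B.1.edgeSet.ncard = (F B).1.edgeSet.ncard ∧
          maxCycleLength B.1 = maxCycleLength (F B).1 := by
  obtain ⟨K, hv1K, rfl⟩ : ∃ K, v1 ∉ K ∧ H = insert v1 K :=
    ⟨H \ {v1}, by simp, (Set.insert_sdiff_self_of_mem h1).symm⟩
  have hφ := isTypeBFlip_typeBFlip hv1K hv2 fun x y hxy hx ↦
    hHedge x y hxy ⟨Or.inr hx, ne_of_mem_of_not_mem hx hv1K⟩
  have hG' := hφ.connected hGconn hadj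
  have : Nontrivial V := ⟨v1, v2, hadj.ne⟩
  refine ⟨fun B hB ↦ ⟨_, (hφ.blockEquiv hGconn hG' ⟨B, hB⟩).2, hφ.bijOn_phiB hB.isNonseparable⟩,
    hφ.blockEquiv hGconn hG', fun ⟨B, hB⟩ ↦ ?_⟩
  obtain ⟨x, y, hxy⟩ := hGconn.exists_adj_of_isBlock hB
  have hbij := hφ.bijOn_phiB hB.isNonseparable
  exact ⟨hbij, hbij.ncard_eq, (hφ.maxCycleLength_flipSub hB.isNonseparable hxy).symm⟩

/-- for a connected simple graph `G` with at least one edge, the edge map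
`phiB` of the Type B Whitney flip maps the edge set of each block of `G` bijectively onto
the edge set of a block of the flipped graph, inducing a bijection between blocks which
preserves the number of edges and the maximum cycle length. -/
theorem typeBFlip_block_bijection {V : Type*} [Fintype V] [DecidableEq V]
    (G : SimpleGraph V) (hGconn : G.Connected) (hGedge : G.edgeSet.Nonempty)
    (v1 v2 : V) (hadj : G.Adj v1 v2)
    (H : Set V) (h1 : v1 ∈ H) (hv2 : v2 ∉ H) (hHconn : (G.induce H).Connected)
    (hHedge : ∀ x y : V, G.Adj x y → x ∈ H \ ({v1} : Set V) → y ∈ H) :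
    (∀ B : G.Subgraph, B.IsBlock → ∃ B' : (typeBFlip G v1 v2 H hv2).Subgraph, B'.IsBlock ∧
        Set.BijOn (phiB v1 v2 H) B.edgeSet B'.edgeSet) ∧
      ∃ F : {B : G.Subgraph // B.IsBlock} ≃
          {B' : (typeBFlip G v1 v2 H hv2).Subgraph // B'.IsBlock},
        ∀ B : {B : G.Subgraph // B.IsBlock},
          Set.BijOn (phiB v1 v2 H) B.1.edgeSet (F B).1.edgeSet ∧
          B.1.edgeSet.ncard = (F B).1.edgeSet.ncard ∧
          maxCycleLength B.1 = maxCycleLength (F B).1 :=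
  typeBFlip_block_bijection_general G hGconn v1 v2 hadj H h1 hv2 hHedge
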